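/- Let ν be a product measure on {0,1}^m given by ν(η) ∝ Π W_i^{η_i} with all W_i > 0. Then ν has the normalized matching property: for l ≥ k (with both levels of positive probability), the conditional measure ν(· | Ση_i = l) stochastically dominates ν(· | Ση_i = k), i.e., for every increasing event A, ν(A | Ση_i = l) ≥ ν(A | Ση_i = k). -/

import Mathlib

/-!
It suffices to show `a s · E (s + 1) ≤ a (s + 1) · E s`, where `a j` and `E j` are the weights of
`A` and of the whole cube at level `j`. Induct on the number of coordinates, splitting on the
first one: if `e`, `p`, `q` are the level weights of the remaining cube and of the two slices
`A₀ ⊆ A₁` of `A` (both increasing), then `E (j + 1) = e (j + 1) + W₀ e j` and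
`a (j + 1) = p (j + 1) + W₀ q j`. The inequality for `a` follows from those for `p` and `q`,
from `p ≤ q`, and from log-concavity of `e` (Newton's inequality), which propagates through the
same recursion.
-/

open Finset

/-- The number of coordinates of `η` equal to `true`. -/
def lvl {m : ℕ} (η : Fin m → Bool) : ℕ := (univ.filter fun i => η i = true).card

/-- An event is increasing if it is closed upward in the coordinatewise order. -/
def IncrEvent {m : ℕ} (A : Finset (Fin m → Bool)) : Prop :=
  ∀ η ∈ A, ∀ τ : Fin m → Bool, (∀ i, η i = true → τ i = true) → τ ∈ A

/-- Unnormalized weight of the product measure `ν(η) ∝ ∏ W i ^ η i`. -/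
def prodWt {m : ℕ} (W : Fin m → ℝ) (η : Fin m → Bool) : ℝ :=
  ∏ i, if η i = true then W i else 1

theorem mul_le_mul_of_sq_le_of_sq_le {a b c d : ℝ} (hd : 0 ≤ d) (hb : 0 < b)
    (hc : 0 < c) (hac : a * c ≤ b ^ 2) (hbd : b * d ≤ c ^ 2) : a * d ≤ b * c := by
  refine le_of_mul_le_mul_right ?_ (mul_pos hb hc)
  nlinarith [mul_le_mul hac hbd (by positivity) (by positivity)]

theorem add_mul_sq_le_of_logConcave {w s₀ s₁ s₂ s₃ : ℝ} (hw : 0 ≤ w)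
    (h₀₂ : s₀ * s₂ ≤ s₁ ^ 2) (h₁₃ : s₁ * s₃ ≤ s₂ ^ 2) (h₀₃ : s₀ * s₃ ≤ s₁ * s₂) :
    (s₁ + w * s₀) * (s₃ + w * s₂) ≤ (s₂ + w * s₁) ^ 2 := by
  nlinarith [mul_le_mul_of_nonneg_left h₀₂ (mul_nonneg hw hw), mul_le_mul_of_nonneg_left h₀₃ hw]

theorem add_mul_ratio_le {w p₁ p₂ q₀ q₁ s₀ s₁ s₂ : ℝ} (hw : 0 ≤ w) (hs₀ : 0 < s₀) (hs₁ : 0 < s₁)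
    (hs₂ : 0 ≤ s₂) (hs : s₀ * s₂ ≤ s₁ ^ 2) (hp : p₁ * s₂ ≤ p₂ * s₁) (hq : q₀ * s₁ ≤ q₁ * s₀)
    (hpq : p₁ ≤ q₁) :
    (p₁ + w * q₀) * (s₂ + w * s₁) ≤ (p₂ + w * q₁) * (s₁ + w * s₀) := by
  have middle : p₁ * s₁ + q₀ * s₂ ≤ p₂ * s₀ + q₁ * s₁ := by
    refine le_of_mul_le_mul_right ?_ (mul_pos hs₀ hs₁)
    -- compare the ratios q₀ / s₀ and p₁ / s₁
    rcases le_total (q₀ * s₁) (p₁ * s₀) with h | h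
    · nlinarith [mul_le_mul_of_nonneg_right h (mul_nonneg hs₀.le hs₂),
        mul_le_mul_of_nonneg_right hp (mul_nonneg hs₀.le hs₀.le),
        mul_le_mul_of_nonneg_right hpq (mul_nonneg hs₀.le (mul_nonneg hs₁.le hs₁.le))]
    · nlinarith [mul_le_mul_of_nonneg_left hs (sub_nonneg.2 h),
        mul_le_mul_of_nonneg_left hp (mul_nonneg hs₀.le hs₀.le),
        mul_le_mul_of_nonneg_left hq (mul_nonneg hs₁.le hs₁.le)]
  nlinarith [mul_le_mul_of_nonneg_left middle hw, mul_le_mul_of_nonneg_left hq (mul_nonneg hw hw)]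

def levelWt {m : ℕ} (W : Fin m → ℝ) (A : Finset (Fin m → Bool)) (j : ℕ) : ℝ :=
  ∑ η ∈ A, if lvl η = j then prodWt W η else 0

def headSlice {m : ℕ} (b : Bool) (A : Finset (Fin (m + 1) → Bool)) : Finset (Fin m → Bool) :=
  univ.filter fun ξ => Fin.cons b ξ ∈ A

@[simp]
theorem mem_headSlice {m : ℕ} {b : Bool} {A : Finset (Fin (m + 1) → Bool)} {ξ : Fin m → Bool} :
    ξ ∈ headSlice b A ↔ Fin.cons b ξ ∈ A := by
  simp [headSlice]

@[simp]
theorem headSlice_univ {m : ℕ} (b : Bool) :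
    headSlice b (univ : Finset (Fin (m + 1) → Bool)) = univ := by
  simp [headSlice]

theorem lvl_le {m : ℕ} (η : Fin m → Bool) : lvl η ≤ m :=
  (card_filter_le _ _).trans_eq (card_fin m)

theorem lvl_cons {m : ℕ} (b : Bool) (ξ : Fin m → Bool) :
    lvl (Fin.cons b ξ : Fin (m + 1) → Bool) = (if b then 1 else 0) + lvl ξ := by
  simp only [lvl, card_filter, Fin.sum_univ_succ]
  simp

theorem prodWt_pos {m : ℕ} {W : Fin m → ℝ} (hW : ∀ i, 0 < W i) (η : Fin m → Bool) :
    0 < prodWt W η :=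
  prod_pos fun i _ => by split <;> simp [hW i]

theorem prodWt_cons {m : ℕ} (W : Fin (m + 1) → ℝ) (b : Bool) (ξ : Fin m → Bool) :
    prodWt W (Fin.cons b ξ) = (if b then W 0 else 1) * prodWt (Fin.tail W) ξ := by
  simp [prodWt, Fin.prod_univ_succ, Fin.tail]

theorem sum_cube_succ {m : ℕ} (f : (Fin (m + 1) → Bool) → ℝ) :
    ∑ η, f η = ∑ ξ : Fin m → Bool, (f (Fin.cons false ξ) + f (Fin.cons true ξ)) := by
  rw [← (Fin.consEquiv fun _ => Bool).sum_comp, Fintype.sum_prod_type, Fintype.sum_bool,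
    ← sum_add_distrib]
  exact sum_congr rfl fun ξ _ => add_comm _ _

section levelWt

variable {m : ℕ} {W : Fin m → ℝ}

theorem levelWt_nonneg (hW : ∀ i, 0 < W i) (A : Finset (Fin m → Bool)) (j : ℕ) :
    0 ≤ levelWt W A j :=
  sum_nonneg fun η _ => by split <;> simp [(prodWt_pos hW η).le]

theorem levelWt_mono (hW : ∀ i, 0 < W i) {A B : Finset (Fin m → Bool)} (hAB : A ⊆ B) (j : ℕ) :
    levelWt W A j ≤ levelWt W B j :=
  sum_le_sum_of_subset_of_nonneg hAB fun η _ _ => by split <;> simp [(prodWt_pos hW η).le]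

theorem levelWt_eq_zero_of_lt (A : Finset (Fin m → Bool)) {j : ℕ} (hj : m < j) :
    levelWt W A j = 0 :=
  sum_eq_zero fun η _ => if_neg (by have := lvl_le η; omega)

theorem levelWt_eq_sum_univ (A : Finset (Fin m → Bool)) (j : ℕ) :
    levelWt W A j = ∑ η, if η ∈ A ∧ lvl η = j then prodWt W η else 0 := by
  simp only [levelWt, ite_and, ← sum_filter, filter_mem_eq_inter, univ_inter]

end levelWt

section cons

variable {m : ℕ} (W : Fin (m + 1) → ℝ) (A : Finset (Fin (m + 1) → Bool))

theorem levelWt_cons_zero : levelWt W A 0 = levelWt (Fin.tail W) (headSlice false A) 0 := by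
  simp [levelWt_eq_sum_univ, sum_cube_succ, lvl_cons, prodWt_cons]

theorem levelWt_cons_succ (j : ℕ) :
    levelWt W A (j + 1) = levelWt (Fin.tail W) (headSlice false A) (j + 1)
      + W 0 * levelWt (Fin.tail W) (headSlice true A) j := by
  simp [levelWt_eq_sum_univ, sum_cube_succ, lvl_cons, prodWt_cons, mul_sum, sum_add_distrib,
    add_comm 1, and_comm]

end cons

theorem incrEvent_headSlice {m : ℕ} {A : Finset (Fin (m + 1) → Bool)} (hA : IncrEvent A)
    (b : Bool) : IncrEvent (headSlice b A) := by
  intro ξ hξ τ hτ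
  rw [mem_headSlice] at hξ ⊢
  exact hA _ hξ _ fun i => Fin.cases (by simp) (by simpa using hτ) i

theorem headSlice_false_subset_true {m : ℕ} {A : Finset (Fin (m + 1) → Bool)}
    (hA : IncrEvent A) : headSlice false A ⊆ headSlice true A := by
  intro ξ hξ
  rw [mem_headSlice] at hξ ⊢
  exact hA _ hξ _ fun i => Fin.cases (by simp) (by simp) i

theorem levelWt_univ_pos {m : ℕ} {W : Fin m → ℝ} (hW : ∀ i, 0 < W i) {j : ℕ} (hj : j ≤ m) :
    0 < levelWt W univ j := by
  induction m generalizing j with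
  | zero => simp [Nat.le_zero.1 hj, levelWt, lvl, prodWt]
  | succ m ih =>
    have hW' : ∀ i, 0 < Fin.tail W i := fun i => hW i.succ
    cases j with
    | zero => simpa [levelWt_cons_zero] using ih hW' (Nat.zero_le m)
    | succ j =>
      rw [levelWt_cons_succ, headSlice_univ, headSlice_univ]
      exact add_pos_of_nonneg_of_pos (levelWt_nonneg hW' _ _)
        (mul_pos (hW 0) (ih hW' (by omega)))

theorem levelWt_univ_logConcave {m : ℕ} {W : Fin m → ℝ} (hW : ∀ i, 0 < W i) (j : ℕ) :
    levelWt W univ j * levelWt W univ (j + 2) ≤ levelWt W univ (j + 1) ^ 2 := by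
  induction m generalizing j with
  | zero =>
    rw [levelWt_eq_zero_of_lt univ (by omega : 0 < j + 2),
      levelWt_eq_zero_of_lt univ (by omega : 0 < j + 1)]
    simp
  | succ m ih =>
    have hW' : ∀ i, 0 < Fin.tail W i := fun i => hW i.succ
    set e := levelWt (Fin.tail W) univ
    have he : ∀ i, 0 ≤ e i := levelWt_nonneg hW' univ
    have chain (i : ℕ) : e i * e (i + 3) ≤ e (i + 1) * e (i + 2) := by
      by_cases hi : i + 2 ≤ m
      · exact mul_le_mul_of_sq_le_of_sq_le (he _) (levelWt_univ_pos hW' (by omega))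
          (levelWt_univ_pos hW' hi) (ih hW' i) (ih hW' (i + 1))
      · rw [show e (i + 3) = 0 from levelWt_eq_zero_of_lt univ (by omega), mul_zero]
        exact mul_nonneg (he _) (he _)
    cases j with
    | zero =>
      have h₀₂ : 0 * e 1 ≤ e 0 ^ 2 := by simpa using sq_nonneg (e 0)
      have h₀₃ : 0 * e 2 ≤ e 0 * e 1 := by simpa using mul_nonneg (he 0) (he 1)
      simpa [levelWt_cons_zero, levelWt_cons_succ, e] using
        add_mul_sq_le_of_logConcave (hW 0).le h₀₂ (ih hW' 0) h₀₃
    | succ i =>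
      simpa [levelWt_cons_succ, e, add_assoc] using
        add_mul_sq_le_of_logConcave (hW 0).le (ih hW' i) (ih hW' (i + 1)) (chain i)

theorem IncrEvent.levelWt_mul_succ_le {m : ℕ} {W : Fin m → ℝ} (hW : ∀ i, 0 < W i)
    {A : Finset (Fin m → Bool)} (hA : IncrEvent A) (s : ℕ) :
    levelWt W A s * levelWt W univ (s + 1) ≤ levelWt W A (s + 1) * levelWt W univ s := by
  induction m generalizing s with
  | zero =>
    rw [levelWt_eq_zero_of_lt univ (by omega : 0 < s + 1), mul_zero]
    exact mul_nonneg (levelWt_nonneg hW _ _) (levelWt_nonneg hW _ _)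
  | succ m ih =>
    have hW' : ∀ i, 0 < Fin.tail W i := fun i => hW i.succ
    set P := levelWt (Fin.tail W) (headSlice false A)
    set Q := levelWt (Fin.tail W) (headSlice true A)
    set S := levelWt (Fin.tail W) univ
    have hPQ (i : ℕ) : P i ≤ Q i := levelWt_mono hW' (headSlice_false_subset_true hA) i
    have hP (i : ℕ) : P i * S (i + 1) ≤ P (i + 1) * S i := ih hW' (incrEvent_headSlice hA false) i
    have hQ (i : ℕ) : Q i * S (i + 1) ≤ Q (i + 1) * S i := ih hW' (incrEvent_headSlice hA true) i
    cases s with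
    | zero =>
      simp only [levelWt_cons_zero, levelWt_cons_succ, headSlice_univ]
      nlinarith [hP 0, mul_le_mul_of_nonneg_left (hPQ 0)
        (mul_nonneg (hW 0).le (levelWt_nonneg hW' univ 0))]
    | succ t =>
      by_cases ht : t + 1 ≤ m
      · simp only [levelWt_cons_succ, headSlice_univ]
        exact add_mul_ratio_le (hW 0).le (levelWt_univ_pos hW' (by omega))
          (levelWt_univ_pos hW' ht) (levelWt_nonneg hW' univ _)
          (levelWt_univ_logConcave hW' t) (hP (t + 1)) (hQ t) (hPQ (t + 1))
      · rw [levelWt_eq_zero_of_lt univ (by omega : m + 1 < t + 1 + 1), mul_zero]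
        exact mul_nonneg (levelWt_nonneg hW _ _) (levelWt_nonneg hW _ _)

theorem IncrEvent.levelWt_div_monotoneOn {m : ℕ} {W : Fin m → ℝ} (hW : ∀ i, 0 < W i)
    {A : Finset (Fin m → Bool)} (hA : IncrEvent A) :
    MonotoneOn (fun j => levelWt W A j / levelWt W univ j) (Set.Iic m) := by
  refine monotoneOn_of_le_succ Set.ordConnected_Iic fun j _ hj hj' => ?_
  rw [Order.succ_eq_add_one] at hj' ⊢
  rw [div_le_div_iff₀ (levelWt_univ_pos hW hj) (levelWt_univ_pos hW hj')]
  exact hA.levelWt_mul_succ_le hW j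

theorem stmt_19_general (m : ℕ) (W : Fin m → ℝ) (hW : ∀ i, 0 < W i)
    (k l : ℕ) (hkl : k ≤ l)
    (hl : 0 < ∑ η : Fin m → Bool, if lvl η = l then prodWt W η else 0)
    (A : Finset (Fin m → Bool)) (hA : IncrEvent A) :
    (∑ η ∈ A, if lvl η = k then prodWt W η else 0) /
        (∑ η : Fin m → Bool, if lvl η = k then prodWt W η else 0)
      ≤ (∑ η ∈ A, if lvl η = l then prodWt W η else 0) /
        (∑ η : Fin m → Bool, if lvl η = l then prodWt W η else 0) := by
  have hlm : l ≤ m := by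
    by_contra! h
    exact hl.ne' (levelWt_eq_zero_of_lt univ h)
  exact hA.levelWt_div_monotoneOn hW (hkl.trans hlm) hlm hkl

theorem stmt_19 (m : ℕ) (W : Fin m → ℝ) (hW : ∀ i, 0 < W i)
    (k l : ℕ) (hkl : k ≤ l)
    (hk : 0 < ∑ η : Fin m → Bool, if lvl η = k then prodWt W η else 0)
    (hl : 0 < ∑ η : Fin m → Bool, if lvl η = l then prodWt W η else 0)
    (A : Finset (Fin m → Bool)) (hA : IncrEvent A) :
    (∑ η ∈ A, if lvl η = k then prodWt W η else 0) /
        (∑ η : Fin m → Bool, if lvl η = k then prodWt W η else 0)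
      ≤ (∑ η ∈ A, if lvl η = l then prodWt W η else 0) /
        (∑ η : Fin m → Bool, if lvl η = l then prodWt W η else 0) :=
  stmt_19_general m W hW k l hkl hl A hA
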